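/- arXiv:2102.05858 — 4 statements merged into one kernel-verified Lean document; each statement's English description precedes it below -/
import Mathlib

section
/- Let X be a finite subset of ℝ^d that spans ℝ^d, let p_X be the uniform distribution on X, let G be a nonempty subset of X, and let κ ∈ (0, 1/2]. Then there exists a probability distribution q supported on G such that, writing q^{G,κ} = κ·p_X + (1−κ)·q (a distribution on X), the matrix S(q^{G,κ}) = Σ_{x∈X} q^{G,κ}_x x xᵀ is invertible and xᵀ S(q^{G,κ})^{-1} x ≤ 2d for every x ∈ G. -/
/-!
Take `q` maximizing `det S(q^{G,κ})` over the (compact, convex) set of distributions on `G`;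
since `κ > 0` and `X` spans, every such `S` is positive definite. For `g ∈ G`, moving `q`
towards the point mass `δ_g` cannot increase the determinant, and `det ((1-t) S + t N) =
det S · (1 + t (tr (S⁻¹ N) - d) + O(t²))` with `N = S(δ_g^{G,κ})`, so `tr (S⁻¹ N) ≤ d`.
Finally `tr (S⁻¹ N) = ∑ₓ δ_g^{G,κ}(x) xᵀS⁻¹x ≥ (1 - κ) gᵀS⁻¹g`, and `1 - κ ≥ 1/2`.
-/

open Finset

/-- `Smat X p` is the matrix `S(p) = ∑_{x ∈ X} p_x · x xᵀ`. -/
noncomputable def Smat {d : ℕ} (X : Finset (Fin d → ℝ)) (p : (Fin d → ℝ) → ℝ) :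
    Matrix (Fin d) (Fin d) ℝ :=
  ∑ x ∈ X, p x • Matrix.vecMulVec x x

open Matrix

section Distributions

variable {α : Type*}

def distributionsOn (G : Finset α) : Set (α → ℝ) :=
  {q | (∀ x, 0 ≤ q x) ∧ (∀ x ∉ G, q x = 0) ∧ ∑ x ∈ G, q x = 1}

variable {G : Finset α}

theorem le_one_of_mem_distributionsOn {q : α → ℝ} (hq : q ∈ distributionsOn G) (x : α) :
    q x ≤ 1 := by
  obtain ⟨hnonneg, hsupp, hsum⟩ := hq
  by_cases hx : x ∈ G
  · exact hsum ▸ single_le_sum (fun y _ => hnonneg y) hx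
  · simp [hsupp x hx]

theorem isCompact_distributionsOn (G : Finset α) : IsCompact (distributionsOn G) := by
  refine (isCompact_univ_pi fun _ => isCompact_Icc (a := (0 : ℝ)) (b := 1)).of_isClosed_subset
    ?_ fun q hq x _ => ⟨hq.1 x, le_one_of_mem_distributionsOn hq x⟩
  simp only [distributionsOn, Set.ofPred_and, Set.ofPred_forall]
  refine (isClosed_iInter fun x => isClosed_le continuous_const (continuous_apply x)).inter
    ((isClosed_iInter fun x => isClosed_iInter fun _ => isClosed_eq (continuous_apply x)
      continuous_const).inter (isClosed_eq ?_ continuous_const))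
  exact continuous_finsetSum _ fun x _ => continuous_apply x

theorem convex_distributionsOn (G : Finset α) : Convex ℝ (distributionsOn G) := by
  rintro q ⟨hq0, hqs, hq1⟩ q' ⟨hq0', hqs', hq1'⟩ a b ha hb hab
  refine ⟨fun x => ?_, fun x hx => ?_, ?_⟩
  · simp only [Pi.add_apply, Pi.smul_apply, smul_eq_mul]
    exact add_nonneg (mul_nonneg ha (hq0 x)) (mul_nonneg hb (hq0' x))
  · simp [hqs x hx, hqs' x hx]
  · simp [sum_add_distrib, ← mul_sum, hq1, hq1', hab]

theorem single_mem_distributionsOn [DecidableEq α] {g : α} (hg : g ∈ G) :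
    Pi.single g 1 ∈ distributionsOn G := by
  refine ⟨fun x => ?_, fun x hx => ?_, ?_⟩
  · by_cases h : x = g <;> simp [h]
  · simp [ne_of_mem_of_not_mem hg hx |>.symm]
  · simp [Pi.single_apply, hg]

end Distributions

section FirstOrder

variable {n : Type*} [Fintype n] [DecidableEq n]

theorem trace_nonpos_of_det_one_add_smul_le_one {C : Matrix n n ℝ}
    (h : ∀ t ∈ Set.Ioc (0 : ℝ) 1, (1 + t • C).det ≤ 1) : C.trace ≤ 0 := by
  set P := ((1 + (Polynomial.X : Polynomial ℝ) • C.map Polynomial.C).det).divX.divX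
  have hslope : ∀ t ∈ Set.Ioc (0 : ℝ) 1, C.trace + P.eval t * t ≤ 0 := by
    intro t ht
    have := h t ht
    rw [det_one_add_smul] at this
    nlinarith [ht.1]
  have hlim : Filter.Tendsto (fun t => C.trace + P.eval t * t) (nhdsWithin 0 (Set.Ioi 0))
      (nhds C.trace) := by
    have hcont : Continuous fun t => C.trace + P.eval t * t := by fun_prop
    simpa using (hcont.tendsto 0).mono_left nhdsWithin_le_nhds
  exact le_of_tendsto hlim (Filter.mem_of_superset (Ioc_mem_nhdsGT one_pos) hslope)

theorem trace_inv_mul_le_card_of_det_le {S N : Matrix n n ℝ} (hS : 0 < S.det)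
    (h : ∀ t ∈ Set.Ioc (0 : ℝ) 1, ((1 - t) • S + t • N).det ≤ S.det) :
    (S⁻¹ * N).trace ≤ Fintype.card n := by
  have hSu : IsUnit S.det := hS.ne'.isUnit
  have hfac : ∀ t : ℝ, (1 - t) • S + t • N = S * (1 + t • (S⁻¹ * N - 1)) := by
    intro t
    rw [Matrix.mul_add, Matrix.mul_one, Matrix.mul_smul, Matrix.mul_sub, ← Matrix.mul_assoc,
      mul_nonsing_inv S hSu, Matrix.one_mul, Matrix.mul_one]
    module
  have htr := trace_nonpos_of_det_one_add_smul_le_one (C := S⁻¹ * N - 1) fun t ht => by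
    have := h t ht
    rw [hfac, det_mul] at this
    exact le_of_mul_le_mul_left (this.trans_eq (mul_one _).symm) hS
  simpa [trace_sub] using htr

end FirstOrder

section Smat

variable {d : ℕ} (X : Finset (Fin d → ℝ))

theorem Smat_add (p p' : (Fin d → ℝ) → ℝ) : Smat X (p + p') = Smat X p + Smat X p' := by
  simp only [Smat, Pi.add_apply, add_smul, sum_add_distrib]

theorem Smat_smul (a : ℝ) (p : (Fin d → ℝ) → ℝ) : Smat X (a • p) = a • Smat X p := by
  simp only [Smat, Pi.smul_apply, smul_eq_mul, mul_smul, smul_sum]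

theorem continuous_Smat : Continuous (Smat X) :=
  continuous_finsetSum _ fun x _ => (continuous_apply x).smul continuous_const

theorem trace_mul_Smat (B : Matrix (Fin d) (Fin d) ℝ) (p : (Fin d → ℝ) → ℝ) :
    (B * Smat X p).trace = ∑ x ∈ X, p x * (x ⬝ᵥ (B *ᵥ x)) := by
  simp only [Smat, mul_sum, trace_sum, Matrix.mul_smul, trace_smul, mul_vecMulVec,
    trace_vecMulVec, smul_eq_mul]
  exact sum_congr rfl fun x _ => by rw [dotProduct_comm]

theorem dotProduct_Smat_mulVec (p : (Fin d → ℝ) → ℝ) (v : Fin d → ℝ) :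
    v ⬝ᵥ (Smat X p *ᵥ v) = ∑ x ∈ X, p x * (x ⬝ᵥ v) ^ 2 := by
  rw [Smat, sum_mulVec, dotProduct_sum]
  refine sum_congr rfl fun x _ => ?_
  simp [smul_mulVec, vecMulVec_mulVec, dotProduct_comm v x, sq]

theorem Smat_isHermitian (p : (Fin d → ℝ) → ℝ) : (Smat X p).IsHermitian := by
  simp only [IsHermitian, Smat, conjTranspose_eq_transpose_of_trivial, transpose_sum,
    transpose_smul, transpose_vecMulVec]

theorem eq_zero_of_forall_dotProduct_eq_zero {v : Fin d → ℝ}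
    (hspan : Submodule.span ℝ (↑X : Set (Fin d → ℝ)) = ⊤) (h : ∀ x ∈ X, v ⬝ᵥ x = 0) :
    v = 0 := by
  have : dotProductEquiv ℝ (Fin d) v = 0 := LinearMap.ext_on hspan fun x hx => h x hx
  simpa using this

theorem Smat_posDef (hspan : Submodule.span ℝ (↑X : Set (Fin d → ℝ)) = ⊤)
    {p : (Fin d → ℝ) → ℝ} (hp : ∀ x ∈ X, 0 < p x) : (Smat X p).PosDef := by
  refine PosDef.of_dotProduct_mulVec_pos (Smat_isHermitian X p) fun v hv => ?_
  obtain ⟨x, hx, hxv⟩ : ∃ x ∈ X, v ⬝ᵥ x ≠ 0 := by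
    by_contra! h
    exact hv (eq_zero_of_forall_dotProduct_eq_zero X hspan h)
  rw [star_trivial, dotProduct_Smat_mulVec]
  refine sum_pos' (fun y hy => mul_nonneg (hp y hy).le (sq_nonneg _)) ⟨x, hx, ?_⟩
  rw [dotProduct_comm] at hxv
  exact mul_pos (hp x hx) (by positivity)

end Smat

theorem exists_mem_distributionsOn_forall_dotProduct_inv_mulVec_le {d : ℕ}
    {X : Finset (Fin d → ℝ)} (hspan : Submodule.span ℝ (↑X : Set (Fin d → ℝ)) = ⊤)
    {G : Finset (Fin d → ℝ)} (hG : G ⊆ X) (hGne : G.Nonempty) {c b : ℝ} (hc : 0 < c)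
    (hb : 0 ≤ b) :
    ∃ q ∈ distributionsOn G, (Smat X fun x => c + b * q x).PosDef ∧
      ∀ g ∈ G, (c + b) * (g ⬝ᵥ ((Smat X fun x => c + b * q x)⁻¹ *ᵥ g)) ≤ d := by
  classical
  set w : ((Fin d → ℝ) → ℝ) → (Fin d → ℝ) → ℝ := fun q x => c + b * q x with hw
  have hw_pos : ∀ q ∈ distributionsOn G, ∀ x, 0 < w q x := fun q hq x =>
    add_pos_of_pos_of_nonneg hc (mul_nonneg hb (hq.1 x))
  have hw_affine : ∀ (t : ℝ) (q q'), w ((1 - t) • q + t • q') = (1 - t) • w q + t • w q' := by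
    intro t q q'
    funext x
    simp only [hw, Pi.add_apply, Pi.smul_apply, smul_eq_mul]
    ring
  have hpos : ∀ q ∈ distributionsOn G, (Smat X (w q)).PosDef := fun q hq =>
    Smat_posDef X hspan fun x _ => hw_pos q hq x
  have hcont : Continuous fun q => (Smat X (w q)).det :=
    ((continuous_Smat X).comp (by fun_prop)).matrix_det
  obtain ⟨g₀, hg₀⟩ := hGne
  obtain ⟨q, hq, hmax⟩ := (isCompact_distributionsOn G).exists_isMaxOn
    ⟨_, single_mem_distributionsOn hg₀⟩ hcont.continuousOn
  refine ⟨q, hq, hpos q hq, fun g hg => ?_⟩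
  set S := Smat X (w q)
  have hfirst : (S⁻¹ * Smat X (w (Pi.single g 1))).trace ≤ d := by
    simpa using trace_inv_mul_le_card_of_det_le (hpos q hq).det_pos fun t ht => by
      rw [← Smat_smul, ← Smat_smul, ← Smat_add, ← hw_affine]
      exact hmax (convex_distributionsOn G hq (single_mem_distributionsOn hg)
        (by linarith [ht.2]) ht.1.le (by ring))
  have hquad : ∀ x, 0 ≤ x ⬝ᵥ (S⁻¹ *ᵥ x) := by
    simpa using (hpos q hq).inv.posSemidef.dotProduct_mulVec_nonneg
  calc (c + b) * (g ⬝ᵥ (S⁻¹ *ᵥ g)) = w (Pi.single g 1) g * (g ⬝ᵥ (S⁻¹ *ᵥ g)) := by simp [hw]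
    _ ≤ ∑ x ∈ X, w (Pi.single g 1) x * (x ⬝ᵥ (S⁻¹ *ᵥ x)) :=
      single_le_sum (fun x _ => mul_nonneg
        (hw_pos _ (single_mem_distributionsOn hg) x).le (hquad x)) (hG hg)
    _ = (S⁻¹ * Smat X (w (Pi.single g 1))).trace := (trace_mul_Smat X _ _).symm
    _ ≤ d := hfirst

/-- existence of a distribution `q` supported on `G ⊆ X` such that the mixture
`q^{G,κ} = κ · p_X + (1 − κ) · q` with the uniform distribution `p_X` on `X` has
`S(q^{G,κ})` invertible and `xᵀ S(q^{G,κ})⁻¹ x ≤ 2d` for all `x ∈ G`. -/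
theorem exists_d_distribution {d : ℕ} (X : Finset (Fin d → ℝ))
    (hspan : Submodule.span ℝ (↑X : Set (Fin d → ℝ)) = ⊤)
    (G : Finset (Fin d → ℝ)) (hG : G ⊆ X) (hGne : G.Nonempty)
    (κ : ℝ) (hκ0 : 0 < κ) (hκ : κ ≤ 1 / 2) :
    ∃ q : (Fin d → ℝ) → ℝ,
      (∀ x ∈ X, 0 ≤ q x) ∧ (∑ x ∈ X, q x = 1) ∧ (∀ x, x ∉ G → q x = 0) ∧
      IsUnit (Smat X (fun x => κ * (1 / (X.card : ℝ)) + (1 - κ) * q x)) ∧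
      ∀ x ∈ G,
        dotProduct x
            ((Smat X (fun x => κ * (1 / (X.card : ℝ)) + (1 - κ) * q x))⁻¹.mulVec x)
          ≤ 2 * d := by
  have hX : (0 : ℝ) < X.card := by exact_mod_cast card_pos.2 (hGne.mono hG)
  obtain ⟨q, ⟨hq0, hqG, hq1⟩, hS, hbound⟩ :=
    exists_mem_distributionsOn_forall_dotProduct_inv_mulVec_le hspan hG hGne
      (c := κ * (1 / (X.card : ℝ))) (b := 1 - κ) (by positivity) (by linarith)
  refine ⟨q, fun x _ => hq0 x, ?_, hqG, hS.isUnit, fun g hg => ?_⟩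
  · rwa [← sum_subset hG fun x _ hx => hqG x hx]
  · have hc : 0 < κ * (1 / (X.card : ℝ)) := by positivity
    have hg := hbound g hg
    set Q := g ⬝ᵥ ((Smat X fun x => κ * (1 / (X.card : ℝ)) + (1 - κ) * q x)⁻¹ *ᵥ g)
    rcases le_or_gt 0 Q with hQ | hQ
    · nlinarith
    · linarith [(Nat.cast_nonneg d : (0 : ℝ) ≤ d)]
end

section
/- Let X be a finite subset of ℝ^d that spans ℝ^d, let Δ̂ : X → [0,∞) satisfy min_{x∈X} Δ̂_x = 0, and let ξ > 0. Suppose p* is a distribution on X with S(p*) invertible that minimizes the function p ↦ Σ_{x∈X} p_x Δ̂_x − (2/ξ)·ln det S(p) over all distributions p on X with S(p) invertible. Then (i) Σ_{x∈X} p*_x Δ̂_x ≤ 2d/ξ, and (ii) xᵀ S(p*)^{-1} x ≤ ξ·Δ̂_x/2 + d for every x ∈ X. -/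
open Finset

/-- `p` is a probability distribution on the finite set `X`. -/
def IsDistOn {d : ℕ} (X : Finset (Fin d → ℝ)) (p : (Fin d → ℝ) → ℝ) : Prop :=
  (∀ x ∈ X, 0 ≤ p x) ∧ ∑ x ∈ X, p x = 1

/-!
At the minimizer, moving mass `t` from `p` towards the point mass at `x ∈ X` cannot decrease the
objective. By the matrix determinant lemma,
`log det S((1-t)p + tδₓ) = d log(1-t) + log det S(p) + log(1 + t/(1-t) · xᵀS(p)⁻¹x)`,
so the one-sided derivative at `t = 0` gives the first-order condition
`xᵀS(p)⁻¹x - d ≤ ξ (Δ̂ₓ - ∑ p_y Δ̂_y) / 2`. Since `xᵀS(p)⁻¹x ≥ 0`, taking `x` with `Δ̂ₓ = 0`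
gives (i); (ii) follows from `∑ p_y Δ̂_y ≥ 0`.
-/

open Matrix Filter Topology

theorem HasDerivAt.nonneg_of_forall_le {f : ℝ → ℝ} {f' a b : ℝ} (hf : HasDerivAt f f' a)
    (hab : a < b) (hmin : ∀ t ∈ Set.Ioo a b, f a ≤ f t) : 0 ≤ f' := by
  refine ge_of_tendsto hf.tendsto_slope_zero_right ?_
  filter_upwards [Ioo_mem_nhdsGT (sub_pos.2 hab)] with t ⟨ht0, htb⟩
  exact smul_nonneg (inv_nonneg.2 ht0.le)
    (sub_nonneg.2 (hmin _ ⟨by linarith, by linarith⟩))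

theorem Matrix.det_add_vecMulVec {n K : Type*} [Fintype n] [DecidableEq n] [Field K]
    {A : Matrix n n K} (hA : IsUnit A.det) (u v : n → K) :
    (A + vecMulVec u v).det = A.det * (1 + v ⬝ᵥ A⁻¹ *ᵥ u) := by
  have : A + vecMulVec u v = A * (1 + vecMulVec (A⁻¹ *ᵥ u) v) := by
    rw [Matrix.mul_add, Matrix.mul_one, mul_vecMulVec, mulVec_mulVec, mul_nonsing_inv _ hA,
      one_mulVec]
  rw [this, det_mul, vecMulVec_eq Unit, det_one_add_replicateCol_mul_replicateRow]

theorem Matrix.det_segment_vecMulVec {n K : Type*} [Fintype n] [DecidableEq n] [Field K]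
    {S : Matrix n n K} (hS : IsUnit S.det) (x : n → K) {t : K} (ht : t ≠ 1) :
    ((1 - t) • S + t • vecMulVec x x).det =
      (1 - t) ^ Fintype.card n * S.det * (1 + t * (1 - t)⁻¹ * (x ⬝ᵥ S⁻¹ *ᵥ x)) := by
  have h1t : (1 - t) ≠ 0 := sub_ne_zero.2 ht.symm
  have hdet : IsUnit ((1 - t) • S).det := by
    rw [det_smul]; exact (pow_ne_zero _ h1t).isUnit.mul hS
  have := invertibleOfNonzero h1t
  rw [← smul_vecMulVec, det_add_vecMulVec hdet, det_smul, inv_smul S (1 - t) hS, invOf_eq_inv]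
  simp only [smul_mulVec, mulVec_smul, dotProduct_smul, smul_eq_mul]
  ring

theorem Matrix.hasDerivAt_log_det_segment_vecMulVec {n : Type*} [Fintype n] [DecidableEq n]
    {S : Matrix n n ℝ} (hS : IsUnit S.det) (x : n → ℝ) :
    HasDerivAt (fun t => Real.log ((1 - t) • S + t • vecMulVec x x).det)
      (x ⬝ᵥ S⁻¹ *ᵥ x - Fintype.card n) (0 : ℝ) := by
  set c := x ⬝ᵥ S⁻¹ *ᵥ x
  have hsub : HasDerivAt (fun t : ℝ => 1 - t) (-1) 0 := (hasDerivAt_id 0).const_sub 1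
  have hfactor : HasDerivAt (fun t : ℝ => 1 + t * (1 - t)⁻¹ * c) c 0 := by
    have := (((hasDerivAt_id 0).mul (hsub.inv (by norm_num))).mul_const c).const_add 1
    simpa using this
  have hformula : (fun t => Real.log ((1 - t) • S + t • vecMulVec x x).det) =ᶠ[𝓝 0]
      fun t => Fintype.card n * Real.log (1 - t) + Real.log S.det +
        Real.log (1 + t * (1 - t)⁻¹ * c) := by
    have hfactor0 : (1 : ℝ) + 0 * (1 - 0)⁻¹ * c ≠ 0 := by norm_num
    filter_upwards [eventually_ne_nhds (zero_ne_one' ℝ),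
      hfactor.continuousAt.eventually_ne hfactor0] with t ht hne
    have h1t : (1 - t) ≠ 0 := sub_ne_zero.2 ht.symm
    rw [det_segment_vecMulVec hS x ht, Real.log_mul (by simp [h1t, hS.ne_zero]) hne,
      Real.log_mul (pow_ne_zero _ h1t) hS.ne_zero, Real.log_pow]
  refine HasDerivAt.congr_of_eventuallyEq ?_ hformula
  have := (((hsub.log (by norm_num)).const_mul (Fintype.card n : ℝ)).add_const
    (Real.log S.det)).add (hfactor.log (by norm_num))
  exact this.congr_deriv (by norm_num; ring)

section Design

variable {d : ℕ} {X : Finset (Fin d → ℝ)} {p : (Fin d → ℝ) → ℝ}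

noncomputable def logDetObjective (X : Finset (Fin d → ℝ)) (Δ : (Fin d → ℝ) → ℝ) (ξ : ℝ)
    (q : (Fin d → ℝ) → ℝ) : ℝ :=
  ∑ x ∈ X, q x * Δ x - (2 / ξ) * Real.log (Smat X q).det

open Classical in
noncomputable def mixDirac (p : (Fin d → ℝ) → ℝ) (x : Fin d → ℝ) (t : ℝ) :
    (Fin d → ℝ) → ℝ :=
  fun y => (1 - t) * p y + if y = x then t else 0

theorem sum_mixDirac_smul {M : Type*} [AddCommGroup M] [Module ℝ M] {x : Fin d → ℝ}
    (hx : x ∈ X) (t : ℝ) (f : (Fin d → ℝ) → M) :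
    ∑ y ∈ X, mixDirac p x t y • f y = (1 - t) • ∑ y ∈ X, p y • f y + t • f x := by
  simp only [mixDirac, add_smul, mul_smul, ite_smul, zero_smul, sum_add_distrib, ← smul_sum,
    sum_ite_eq', hx, if_true]

theorem isDistOn_mixDirac (hp : IsDistOn X p) {x : Fin d → ℝ} (hx : x ∈ X) {t : ℝ}
    (ht0 : 0 ≤ t) (ht1 : t ≤ 1) : IsDistOn X (mixDirac p x t) := by
  refine ⟨fun y hy => ?_, ?_⟩
  · have hpy := hp.1 y hy
    unfold mixDirac
    split_ifs <;> nlinarith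
  · simpa [hp.2] using sum_mixDirac_smul (p := p) hx t (fun _ => (1 : ℝ))

theorem Smat_mixDirac {x : Fin d → ℝ} (hx : x ∈ X) (t : ℝ) :
    Smat X (mixDirac p x t) = (1 - t) • Smat X p + t • vecMulVec x x :=
  sum_mixDirac_smul hx t _

theorem Smat_posSemidef (hp : ∀ x ∈ X, 0 ≤ p x) : (Smat X p).PosSemidef :=
  posSemidef_sum X fun x hx => by
    simpa using (posSemidef_vecMulVec_self_star x).smul (hp x hx)

theorem Smat_posDef_s1 (hp : ∀ x ∈ X, 0 ≤ p x) (hu : IsUnit (Smat X p)) : (Smat X p).PosDef :=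
  (Smat_posSemidef hp).posDef_iff_isUnit.2 hu

theorem isUnit_Smat_mixDirac (hS : (Smat X p).PosDef) {x : Fin d → ℝ} (hx : x ∈ X) {t : ℝ}
    (ht0 : 0 ≤ t) (ht1 : t < 1) : IsUnit (Smat X (mixDirac p x t)) := by
  rw [Smat_mixDirac hx]
  refine PosDef.isUnit ((hS.smul (sub_pos.2 ht1)).add_posSemidef ?_)
  simpa using (posSemidef_vecMulVec_self_star x).smul ht0

theorem dotProduct_inv_Smat_mulVec_le_of_isMinOn {Δ : (Fin d → ℝ) → ℝ} {ξ : ℝ} (hξ : 0 < ξ)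
    (hp : IsDistOn X p) (hpu : IsUnit (Smat X p))
    (hopt : IsMinOn (logDetObjective X Δ ξ) {q | IsDistOn X q ∧ IsUnit (Smat X q)} p)
    {x : Fin d → ℝ} (hx : x ∈ X) :
    x ⬝ᵥ (Smat X p)⁻¹ *ᵥ x ≤ ξ * (Δ x - ∑ y ∈ X, p y * Δ y) / 2 + d := by
  set S := Smat X p
  set A := ∑ y ∈ X, p y * Δ y
  set c := x ⬝ᵥ S⁻¹ *ᵥ x
  have hS : S.PosDef := Smat_posDef_s1 hp.1 hpu
  have hmix : ∀ t, logDetObjective X Δ ξ (mixDirac p x t) =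
      (1 - t) * A + t * Δ x - (2 / ξ) * Real.log ((1 - t) • S + t • vecMulVec x x).det := by
    intro t
    have hsum := sum_mixDirac_smul (p := p) hx t Δ
    simp only [smul_eq_mul] at hsum
    rw [logDetObjective, Smat_mixDirac hx, hsum]
  have hderiv : HasDerivAt (fun t => logDetObjective X Δ ξ (mixDirac p x t))
      (Δ x - A - (2 / ξ) * (c - d)) 0 := by
    simp only [hmix]
    have hlogdet := hasDerivAt_log_det_segment_vecMulVec ((isUnit_iff_isUnit_det S).1 hpu) x
    have := ((((hasDerivAt_id (0 : ℝ)).const_sub 1).mul_const A).add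
      ((hasDerivAt_id (0 : ℝ)).mul_const (Δ x))).sub (hlogdet.const_mul (2 / ξ))
    exact this.congr_deriv (by simp; ring)
  have hmin : ∀ t ∈ Set.Ioo (0 : ℝ) 1, logDetObjective X Δ ξ (mixDirac p x 0) ≤
      logDetObjective X Δ ξ (mixDirac p x t) := by
    rintro t ⟨ht0, ht1⟩
    have h0 : mixDirac p x 0 = p := by funext y; simp [mixDirac]
    rw [h0]
    exact isMinOn_iff.1 hopt _
      ⟨isDistOn_mixDirac hp hx ht0.le ht1.le, isUnit_Smat_mixDirac hS hx ht0.le ht1⟩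
  have hfoc := hderiv.nonneg_of_forall_le one_pos hmin
  have hscaled := mul_nonneg (half_pos hξ).le hfoc
  have hexpand : ξ / 2 * (Δ x - A - 2 / ξ * (c - d)) = ξ * (Δ x - A) / 2 - (c - d) := by
    field_simp
  linarith

end Design

theorem logdet_minimizer_properties_general {d : ℕ} (X : Finset (Fin d → ℝ))
    (Δ : (Fin d → ℝ) → ℝ) (hΔ0 : ∀ x ∈ X, 0 ≤ Δ x) (hΔmin : ∃ x ∈ X, Δ x = 0)
    (ξ : ℝ) (hξ : 0 < ξ)
    (p : (Fin d → ℝ) → ℝ) (hp : IsDistOn X p) (hpu : IsUnit (Smat X p))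
    (hopt : ∀ q : (Fin d → ℝ) → ℝ, IsDistOn X q → IsUnit (Smat X q) →
      (∑ x ∈ X, p x * Δ x) - (2 / ξ) * Real.log (Smat X p).det ≤
        (∑ x ∈ X, q x * Δ x) - (2 / ξ) * Real.log (Smat X q).det) :
    (∑ x ∈ X, p x * Δ x ≤ 2 * d / ξ) ∧
      ∀ x ∈ X, dotProduct x ((Smat X p)⁻¹.mulVec x) ≤ ξ * Δ x / 2 + d := by
  have hfoc := fun x (hx : x ∈ X) => dotProduct_inv_Smat_mulVec_le_of_isMinOn hξ hp hpu
    (isMinOn_iff.2 fun q hq => hopt q hq.1 hq.2) hx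
  have hquad : ∀ y, 0 ≤ y ⬝ᵥ (Smat X p)⁻¹ *ᵥ y := fun y => by
    simpa using (Smat_posDef_s1 hp.1 hpu).inv.posSemidef.dotProduct_mulVec_nonneg y
  have hA : 0 ≤ ∑ x ∈ X, p x * Δ x := sum_nonneg fun x hx => mul_nonneg (hp.1 x hx) (hΔ0 x hx)
  refine ⟨?_, fun x hx => ?_⟩
  · obtain ⟨x₀, hx₀, hΔx₀⟩ := hΔmin
    have hbound := (hquad x₀).trans (hfoc x₀ hx₀)
    rw [hΔx₀] at hbound
    rw [le_div_iff₀ hξ]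
    linarith
  · linarith [hfoc x hx, mul_nonneg hξ.le hA]

/-- properties of the minimizer of the log-det regularized objective
`p ↦ ∑_x p_x Δ̂_x − (2/ξ) ln det S(p)` over distributions with `S(p)` invertible. -/
theorem logdet_minimizer_properties {d : ℕ} (X : Finset (Fin d → ℝ))
    (hspan : Submodule.span ℝ (↑X : Set (Fin d → ℝ)) = ⊤)
    (Δ : (Fin d → ℝ) → ℝ) (hΔ0 : ∀ x ∈ X, 0 ≤ Δ x) (hΔmin : ∃ x ∈ X, Δ x = 0)
    (ξ : ℝ) (hξ : 0 < ξ)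
    (p : (Fin d → ℝ) → ℝ) (hp : IsDistOn X p) (hpu : IsUnit (Smat X p))
    (hopt : ∀ q : (Fin d → ℝ) → ℝ, IsDistOn X q → IsUnit (Smat X q) →
      (∑ x ∈ X, p x * Δ x) - (2 / ξ) * Real.log (Smat X p).det ≤
        (∑ x ∈ X, q x * Δ x) - (2 / ξ) * Real.log (Smat X q).det) :
    (∑ x ∈ X, p x * Δ x ≤ 2 * d / ξ) ∧
      ∀ x ∈ X, dotProduct x ((Smat X p)⁻¹.mulVec x) ≤ ξ * Δ x / 2 + d :=
  logdet_minimizer_properties_general X Δ hΔ0 hΔmin ξ hξ p hp hpu hopt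
end

section
/- Let G_1, …, G_S be symmetric positive definite d×d real matrices and let G = G_1 + ⋯ + G_S. Let x ∈ ℝ^d, let Δ ∈ ℝ, let U > 0, and set V = U/S. If xᵀ G^{-1} x ≥ Δ²/(2U), then there exists i ∈ {1, …, S} such that xᵀ G_i^{-1} x ≥ Δ²/(2V). -/
/-!
Put `y = G⁻¹ x` and `t = xᵀ G⁻¹ x`, so that `t = yᵀ G y = ∑ yᵀ G_i y`. By pigeonhole some block
has `S · yᵀ G_i y ≤ t`, and Cauchy–Schwarz for the inner product of `G_i` gives
`t² = (yᵀ x)² ≤ (yᵀ G_i y)(xᵀ G_i⁻¹ x)`; together, `S · t ≤ xᵀ G_i⁻¹ x`.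
-/

open Finset Matrix

namespace Matrix

variable {n : Type*} [Fintype n]

lemma PosSemidef.sq_dotProduct_mulVec_le {M : Matrix n n ℝ} (hM : M.PosSemidef) (u v : n → ℝ) :
    (u ⬝ᵥ M *ᵥ v) ^ 2 ≤ (u ⬝ᵥ M *ᵥ u) * (v ⬝ᵥ M *ᵥ v) := by
  let := M.toSeminormedAddCommGroup hM
  let := M.toInnerProductSpace hM
  have hcs := real_inner_mul_inner_self_le u v
  change ((M *ᵥ v) ⬝ᵥ u) * ((M *ᵥ v) ⬝ᵥ u) ≤ ((M *ᵥ u) ⬝ᵥ u) * ((M *ᵥ v) ⬝ᵥ v) at hcs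
  simpa only [sq, dotProduct_comm (M *ᵥ _)] using hcs

variable [DecidableEq n]

lemma mulVec_nonsing_inv_mulVec {α : Type*} [CommRing α] {M : Matrix n n α} (hM : IsUnit M)
    (x : n → α) : M *ᵥ (M⁻¹ *ᵥ x) = x := by
  rw [mulVec_mulVec, mul_nonsing_inv _ ((isUnit_iff_isUnit_det M).mp hM), one_mulVec]

lemma PosDef.sq_dotProduct_le {M : Matrix n n ℝ} (hM : M.PosDef) (u x : n → ℝ) :
    (u ⬝ᵥ x) ^ 2 ≤ (u ⬝ᵥ M *ᵥ u) * (x ⬝ᵥ M⁻¹ *ᵥ x) := by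
  have hcs := hM.posSemidef.sq_dotProduct_mulVec_le u (M⁻¹ *ᵥ x)
  rwa [mulVec_nonsing_inv_mulVec hM.isUnit, dotProduct_comm (M⁻¹ *ᵥ x)] at hcs

lemma exists_card_mul_dotProduct_inv_sum_le {ι : Type*} [Fintype ι] [Nonempty ι]
    {G : ι → Matrix n n ℝ} (hG : ∀ i, (G i).PosDef) (x : n → ℝ) :
    ∃ i, Fintype.card ι * (x ⬝ᵥ (∑ j, G j)⁻¹ *ᵥ x) ≤ x ⬝ᵥ (G i)⁻¹ *ᵥ x := by
  have hsum : (∑ j, G j).PosDef := posDef_sum univ_nonempty fun j _ => hG j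
  set y := (∑ j, G j)⁻¹ *ᵥ x
  set t := x ⬝ᵥ y
  have ht : t = ∑ j, y ⬝ᵥ G j *ᵥ y := by
    rw [← dotProduct_sum, ← sum_mulVec, mulVec_nonsing_inv_mulVec hsum.isUnit, dotProduct_comm]
  have ht_nonneg : 0 ≤ t := by simpa using hsum.inv.posSemidef.dotProduct_mulVec_nonneg x
  obtain ⟨i, -, hi⟩ : ∃ i ∈ univ, Fintype.card ι * (y ⬝ᵥ G i *ᵥ y) ≤ t :=
    exists_le_of_sum_le univ_nonempty (by simp [← mul_sum, ← ht])
  refine ⟨i, ?_⟩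
  have hQ : 0 ≤ x ⬝ᵥ (G i)⁻¹ *ᵥ x := by
    simpa using (hG i).inv.posSemidef.dotProduct_mulVec_nonneg x
  have hcs : t ^ 2 ≤ (y ⬝ᵥ G i *ᵥ y) * (x ⬝ᵥ (G i)⁻¹ *ᵥ x) := by
    simpa [t, dotProduct_comm y x] using (hG i).sq_dotProduct_le y x
  rcases ht_nonneg.eq_or_lt with ht0 | ht_pos
  · rw [← ht0, mul_zero]
    exact hQ
  · nlinarith [mul_le_mul_of_nonneg_right hi hQ]

end Matrix

theorem exists_block_with_large_inverse_quad_form_general {d S : ℕ} (hS : 0 < S)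
    (G : Fin S → Matrix (Fin d) (Fin d) ℝ) (hG : ∀ i, (G i).PosDef)
    (x : Fin d → ℝ) (Δ U : ℝ)
    (h : Δ ^ 2 / (2 * U) ≤ dotProduct x ((∑ i, G i)⁻¹.mulVec x)) :
    ∃ i : Fin S, Δ ^ 2 / (2 * (U / S)) ≤ dotProduct x ((G i)⁻¹.mulVec x) := by
  have : NeZero S := ⟨hS.ne'⟩
  obtain ⟨i, hi⟩ := exists_card_mul_dotProduct_inv_sum_le hG x
  refine ⟨i, ?_⟩
  calc Δ ^ 2 / (2 * (U / S)) = S * (Δ ^ 2 / (2 * U)) := by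
        rw [mul_div_assoc', div_div_eq_mul_div]; ring
    _ ≤ S * (x ⬝ᵥ (∑ j, G j)⁻¹ *ᵥ x) := by gcongr
    _ ≤ x ⬝ᵥ (G i)⁻¹ *ᵥ x := by simpa using hi

/-- if `G = G_1 + ⋯ + G_S` with each `G_i` symmetric positive definite and
`xᵀ G⁻¹ x ≥ Δ²/(2U)`, then some `i` satisfies `xᵀ G_i⁻¹ x ≥ Δ²/(2V)` where `V = U/S`. -/
theorem exists_block_with_large_inverse_quad_form {d S : ℕ} (hS : 0 < S)
    (G : Fin S → Matrix (Fin d) (Fin d) ℝ) (hG : ∀ i, (G i).PosDef)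
    (x : Fin d → ℝ) (Δ U : ℝ) (hU : 0 < U)
    (h : Δ ^ 2 / (2 * U) ≤ dotProduct x ((∑ i, G i)⁻¹.mulVec x)) :
    ∃ i : Fin S, Δ ^ 2 / (2 * (U / S)) ≤ dotProduct x ((G i)⁻¹.mulVec x) :=
  exists_block_with_large_inverse_quad_form_general hS G hG x Δ U h
end

section
/- For all real numbers p, q ∈ [−3/4, 3/4], the Kullback–Leibler divergence kl(p, q) = (1/2)(1 + p)·ln((1 + p)/(1 + q)) + (1/2)(1 − p)·ln((1 − p)/(1 − q)) between the distribution on {−1, +1} with mean p and the distribution on {−1, +1} with mean q satisfies kl(p, q) ≤ 2(p − q)². -/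
/-!
For fixed `p`, the derivative of `q ↦ kl(p, q)` is `(q - p) / (1 - q²)`, and `1 / (1 - q²)` is at
most `1 / (1 - a²)` on `[-a, a]`. Hence `q ↦ (p - q)² / (2 (1 - a²)) - kl(p, q)` decreases on
`[-a, p]` and increases on `[p, a]`; it vanishes at `q = p`, so it is nonnegative on `[-a, a]`.
For `a = 3/4` the constant `1 / (2 (1 - a²)) = 8/7` is below `2`.
-/

open Real Set

lemma isMinOn_Icc_of_hasDerivAt {f f' : ℝ → ℝ} {a b c : ℝ} (hb : b ∈ Icc a c)
    (hf : ∀ x ∈ Icc a c, HasDerivAt f (f' x) x) (h₀ : ∀ x ∈ Ioo a b, f' x ≤ 0)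
    (h₁ : ∀ x ∈ Ioo b c, 0 ≤ f' x) : IsMinOn f (Icc a c) b := by
  have hleft : Ioo a b ⊆ Icc a c := Ioo_subset_Icc_self.trans (Icc_subset_Icc_right hb.2)
  have hright : Ioo b c ⊆ Icc a c := Ioo_subset_Icc_self.trans (Icc_subset_Icc_left hb.1)
  refine isMinOn_Icc_of_deriv (hf a (left_mem_Icc.2 (hb.1.trans hb.2))).continuousAt
    (hf b hb).continuousAt (hf c (right_mem_Icc.2 (hb.1.trans hb.2))).continuousAt
    (fun x hx => (hf x (hleft hx)).differentiableAt.differentiableWithinAt)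
    (fun x hx => (hf x (hright hx)).differentiableAt.differentiableWithinAt) ?_ ?_
  · exact fun x hx => (hf x (hleft hx)).deriv ▸ h₀ x hx
  · exact fun x hx => (hf x (hright hx)).deriv ▸ h₁ x hx

noncomputable def binaryKL (p q : ℝ) : ℝ :=
  1 / 2 * (1 + p) * log ((1 + p) / (1 + q)) + 1 / 2 * (1 - p) * log ((1 - p) / (1 - q))

@[simp]
lemma binaryKL_self (p : ℝ) : binaryKL p p = 0 := by
  simp [binaryKL]

lemma hasDerivAt_binaryKL_right {p q : ℝ} (hp : p ∈ Ioo (-1) 1) (hq : q ∈ Ioo (-1) 1) :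
    HasDerivAt (binaryKL p) ((q - p) / (1 - q ^ 2)) q := by
  obtain ⟨hp₁, hp₂⟩ := hp
  obtain ⟨hq₁, hq₂⟩ := hq
  have hp₁' : 1 + p ≠ 0 := by linarith
  have hp₂' : 1 - p ≠ 0 := by linarith
  have hq₁' : 1 + q ≠ 0 := by linarith
  have hq₂' : 1 - q ≠ 0 := by linarith
  have hplus : HasDerivAt (fun t => log ((1 + p) / (1 + t))) (-1 / (1 + q)) q := by
    refine (((hasDerivAt_const q (1 + p)).fun_div ((hasDerivAt_id' q).const_add 1) hq₁').log
      (div_ne_zero hp₁' hq₁')).congr_deriv ?_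
    field_simp
    ring
  have hminus : HasDerivAt (fun t => log ((1 - p) / (1 - t))) (1 / (1 - q)) q := by
    refine (((hasDerivAt_const q (1 - p)).fun_div ((hasDerivAt_id' q).const_sub 1) hq₂').log
      (div_ne_zero hp₂' hq₂')).congr_deriv ?_
    field_simp
    ring
  refine ((hplus.const_mul (1 / 2 * (1 + p))).add
    (hminus.const_mul (1 / 2 * (1 - p)))).congr_deriv ?_
  rw [show 1 - q ^ 2 = (1 + q) * (1 - q) by ring]
  field_simp
  ring

lemma binaryKL_le_sq_div {a p q : ℝ} (ha : a < 1) (hp : p ∈ Icc (-a) a) (hq : q ∈ Icc (-a) a) :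
    binaryKL p q ≤ (p - q) ^ 2 / (2 * (1 - a ^ 2)) := by
  have hpI : p ∈ Ioo (-1) 1 := ⟨by linarith [hp.1], by linarith [hp.2]⟩
  have ha₀ : 0 < 1 - a ^ 2 := by nlinarith [hp.1, hp.2]
  set g : ℝ → ℝ := fun t => (p - t) ^ 2 / (2 * (1 - a ^ 2)) - binaryKL p t
  have hg : ∀ t ∈ Icc (-a) a,
      HasDerivAt g ((t - p) * (1 / (1 - a ^ 2) - 1 / (1 - t ^ 2))) t := by
    intro t ⟨ht₁, ht₂⟩
    have ht : 0 < 1 - t ^ 2 := by nlinarith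
    refine ((((hasDerivAt_id' t).const_sub p).pow 2 |>.div_const (2 * (1 - a ^ 2))).sub
      (hasDerivAt_binaryKL_right hpI ⟨by linarith, by linarith⟩)).congr_deriv ?_
    field_simp
    ring
  have hweight : ∀ t ∈ Icc (-a) a, 0 ≤ 1 / (1 - a ^ 2) - 1 / (1 - t ^ 2) :=
    fun t ⟨ht₁, ht₂⟩ => sub_nonneg.2 (one_div_le_one_div_of_le ha₀ (by nlinarith))
  have hmin : IsMinOn g (Icc (-a) a) p := by
    refine isMinOn_Icc_of_hasDerivAt hp hg (fun t ht => ?_) (fun t ht => ?_)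
    · exact mul_nonpos_of_nonpos_of_nonneg (by linarith [ht.2])
        (hweight t ⟨ht.1.le, by linarith [ht.2, hp.2]⟩)
    · exact mul_nonneg (by linarith [ht.1]) (hweight t ⟨by linarith [ht.1, hp.1], ht.2.le⟩)
  have hgp : g p = 0 := by simp [g]
  have hgq : g q = (p - q) ^ 2 / (2 * (1 - a ^ 2)) - binaryKL p q := rfl
  linarith [show g p ≤ g q from hmin hq]

/-- for `p, q ∈ [−3/4, 3/4]`, the KL divergence between the `{−1, +1}`-valued
distributions with means `p` and `q` satisfies `kl(p, q) ≤ 2(p − q)²`. -/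
theorem kl_le_two_sq_diff (p q : ℝ) (hp1 : -(3 / 4) ≤ p) (hp2 : p ≤ 3 / 4)
    (hq1 : -(3 / 4) ≤ q) (hq2 : q ≤ 3 / 4) :
    1 / 2 * (1 + p) * Real.log ((1 + p) / (1 + q))
        + 1 / 2 * (1 - p) * Real.log ((1 - p) / (1 - q))
      ≤ 2 * (p - q) ^ 2 := by
  calc _ = binaryKL p q := rfl
    _ ≤ (p - q) ^ 2 / (2 * (1 - (3 / 4) ^ 2)) :=
      binaryKL_le_sq_div (by norm_num) ⟨hp1, hp2⟩ ⟨hq1, hq2⟩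
    _ ≤ 2 * (p - q) ^ 2 := by
      rw [div_le_iff₀ (by norm_num)]
      nlinarith [sq_nonneg (p - q)]
end
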